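/- In the translation-invariant setting, for any a, b ∈ ℳ define η̃_t := φ⁻¹(a) + t[φ⁻¹(b) − φ⁻¹(a)] for t ∈ [0,1] (well-defined since 𝒵 is convex) and γ̃_t := φ(η̃_t). Then γ̃ is a path in ℳ with end-points a, b and l(γ̃) = ⟨φ⁻¹(b) − φ⁻¹(a), M (φ⁻¹(b) − φ⁻¹(a))⟩^{1/2}. -/

import Mathlib

open Set
open scoped ENNReal BigOperators

noncomputable section

/-- The real Hilbert space ℓ² of square-summable real sequences. -/
abbrev l2 : Type := lp (fun _ : ℕ => ℝ) 2

/-- A partition `0 = t₀ ≤ t₁ ≤ … ≤ t_n = 1` of `[0,1]`. -/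
structure PathPartition where
  n : ℕ
  t : ℕ → ℝ
  first : t 0 = 0
  last : t n = 1
  mono : ∀ k, k < n → t k ≤ t (k + 1)

/-- The set of points of a partition. -/
def PathPartition.points (P : PathPartition) : Set ℝ := {x | ∃ k ≤ P.n, P.t k = x}

/-- `χ(γ, 𝒫) = ∑ₖ ‖γ_{t_k} − γ_{t_{k−1}}‖`. -/
def chiSum {E : Type*} [NormedAddCommGroup E] (γ : ℝ → E) (P : PathPartition) : ℝ :=
  ∑ k ∈ Finset.range P.n, ‖γ (P.t (k + 1)) - γ (P.t k)‖

/-- The length of a path: the supremum over all partitions of `χ(γ, 𝒫)`. -/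
def pathLength {E : Type*} [NormedAddCommGroup E] (γ : ℝ → E) : ℝ≥0∞ :=
  ⨆ P : PathPartition, ENNReal.ofReal (chiSum γ P)

/-- A path in `S` with end-points `a, b`: a continuous map `γ : [0,1] → S`
with `γ 0 = a` and `γ 1 = b`. -/
def IsPathIn {E : Type*} [NormedAddCommGroup E] (S : Set E) (a b : E) (γ : ℝ → E) : Prop :=
  ContinuousOn γ (Icc 0 1) ∧ (∀ t ∈ Icc (0:ℝ) 1, γ t ∈ S) ∧ γ 0 = a ∧ γ 1 = b

/-- Geodesic distance in `S`: the infimum of path-lengths over paths in `S` joining `a, b`. -/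
def geodesicDist {E : Type*} [NormedAddCommGroup E] (S : Set E) (a b : E) : ℝ≥0∞ :=
  ⨅ γ : {γ : ℝ → E // IsPathIn S a b γ}, pathLength γ.val

/-- The quadratic form `⟨v, H v⟩ = ∑ᵢⱼ vᵢ Hᵢⱼ vⱼ`. -/
def quadForm {d : ℕ} (H : Matrix (Fin d) (Fin d) ℝ) (v : EuclideanSpace ℝ (Fin d)) : ℝ :=
  ∑ i, ∑ j, v i * H i j * v j

/-- The matrix `M = −Hess g(0)`, with entries `M_{ij} = −∂²g/∂u^{(i)}∂u^{(j)}` at the origin. -/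
def negHess {d : ℕ} (g : EuclideanSpace ℝ (Fin d) → ℝ) : Matrix (Fin d) (Fin d) ℝ :=
  fun i j => -(deriv (fun s : ℝ => deriv (fun r : ℝ =>
    g (r • EuclideanSpace.single i (1:ℝ) + s • EuclideanSpace.single j (1:ℝ))) 0) 0)

/-!
For `γ t = φ (p + t (q - p))` with `p, q ∈ Z`, translation invariance gives
`‖γ s - γ t‖² = 2 (g 0 - g ((s - t) (q - p)))`, so chords of `γ` depend only on `s - t`.
By the triangle inequality the chord over an interval of length `δ` is at most `n` times the
chord over `δ / n`; letting `n → ∞` bounds it by `L δ`, where `L = lim_{u → 0⁺} ‖γ u - γ 0‖ / u`.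
Hence `γ` is `L`-Lipschitz, every partition sum is at most `L`, and uniform partitions attain `L`
in the limit. Since `h u = g (u (q - p))` has a local maximum at `0`, L'Hôpital gives
`L² = -h''(0) = ⟨q - p, M (q - p)⟩`.
-/

open Filter Topology Finset

namespace PathPartition

lemma t_mono (P : PathPartition) {k m : ℕ} (hkm : k ≤ m) (hm : m ≤ P.n) : P.t k ≤ P.t m := by
  induction m, hkm using Nat.le_induction with
  | base => rfl
  | succ m _ ih => exact (ih (by omega)).trans (P.mono m (by omega))

lemma t_mem_Icc (P : PathPartition) {k : ℕ} (hk : k ≤ P.n) : P.t k ∈ Icc (0 : ℝ) 1 :=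
  ⟨P.first ▸ P.t_mono k.zero_le hk, P.last ▸ P.t_mono hk le_rfl⟩

def uniform (n : ℕ) : PathPartition where
  n := n + 1
  t k := k / (n + 1)
  first := by simp
  last := by push_cast; exact div_self (by positivity)
  mono k _ := by gcongr; simp

lemma chiSum_le_of_lipschitzOnWith {E : Type*} [NormedAddCommGroup E] {γ : ℝ → E} {K : NNReal}
    (hγ : LipschitzOnWith K γ (Icc 0 1)) (P : PathPartition) : chiSum γ P ≤ K := by
  calc chiSum γ P ≤ ∑ k ∈ range P.n, K * (P.t (k + 1) - P.t k) := by
        refine sum_le_sum fun k hk => ?_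
        have hk : k < P.n := mem_range.1 hk
        have := hγ.dist_le_mul _ (P.t_mem_Icc hk) _ (P.t_mem_Icc hk.le)
        rwa [dist_eq_norm, Real.dist_eq, abs_of_nonneg (sub_nonneg.2 (P.mono k hk))] at this
    _ = K := by rw [← mul_sum, sum_range_sub P.t, P.first, P.last, sub_zero, mul_one]

end PathPartition

section HomogeneousPath

variable {E : Type*} [NormedAddCommGroup E] {γ : ℝ → E} {L : ℝ}

lemma tendsto_mul_norm_sub_div
    (hL : Tendsto (fun u => ‖γ u - γ 0‖ / u) (𝓝[>] 0) (𝓝 L)) {δ : ℝ} (hδ : 0 < δ) :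
    Tendsto (fun n : ℕ => ((n : ℝ) + 1) * ‖γ (δ / (n + 1)) - γ 0‖) atTop (𝓝 (L * δ)) := by
  have hu : Tendsto (fun n : ℕ => δ / ((n : ℝ) + 1)) atTop (𝓝[>] 0) :=
    tendsto_nhdsWithin_of_tendsto_nhds_of_eventually_within _
      (tendsto_const_nhds.div_atTop (tendsto_atTop_add_const_right _ 1 tendsto_natCast_atTop_atTop))
      (Eventually.of_forall fun n => div_pos hδ (by positivity))
  refine ((hL.comp hu).mul_const δ).congr fun n => ?_
  simp only [Function.comp_apply]
  field_simp

variable (hγ : ∀ s ∈ Icc (0 : ℝ) 1, ∀ t ∈ Icc (0 : ℝ) 1, t ≤ s → ‖γ s - γ t‖ = ‖γ (s - t) - γ 0‖)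
include hγ

lemma norm_sub_le_succ_mul_norm_sub {δ : ℝ} (hδ : δ ∈ Icc (0 : ℝ) 1) (n : ℕ) :
    ‖γ δ - γ 0‖ ≤ ((n : ℝ) + 1) * ‖γ (δ / (n + 1)) - γ 0‖ := by
  set u := δ / ((n : ℝ) + 1)
  have hu : 0 ≤ u := div_nonneg hδ.1 (by positivity)
  have hmem : ∀ k ≤ n + 1, (k : ℝ) * u ∈ Icc (0 : ℝ) 1 := fun k hk =>
    ⟨by positivity, by
      calc (k : ℝ) * u ≤ (n + 1) * u := by gcongr; exact_mod_cast hk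
        _ = δ := by simp only [u]; field_simp
        _ ≤ 1 := hδ.2⟩
  have hstep : ∀ k ∈ range (n + 1), dist (γ (k * u)) (γ ((k + 1 : ℕ) * u)) = ‖γ u - γ 0‖ := by
    intro k hk
    have hk : k < n + 1 := mem_range.1 hk
    rw [dist_comm, dist_eq_norm, hγ _ (hmem (k + 1) hk) _ (hmem k hk.le) (by gcongr; simp)]
    push_cast; ring_nf
  have hδu : ((n + 1 : ℕ) : ℝ) * u = δ := by simp only [u]; push_cast; field_simp
  have := dist_le_range_sum_dist (fun k : ℕ => γ (k * u)) (n + 1)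
  rwa [sum_congr rfl hstep, sum_const, card_range, nsmul_eq_mul, dist_comm, dist_eq_norm, hδu,
    Nat.cast_zero, zero_mul, Nat.cast_succ] at this

lemma chiSum_uniform (n : ℕ) :
    chiSum γ (PathPartition.uniform n) = ((n : ℝ) + 1) * ‖γ (1 / (n + 1)) - γ 0‖ := by
  set P := PathPartition.uniform n
  have hstep : ∀ k ∈ range P.n, ‖γ (P.t (k + 1)) - γ (P.t k)‖ = ‖γ (1 / (n + 1)) - γ 0‖ := by
    intro k hk
    have hk : k < P.n := mem_range.1 hk
    rw [hγ _ (P.t_mem_Icc hk) _ (P.t_mem_Icc hk.le) (P.mono k hk)]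
    simp only [P, PathPartition.uniform]
    push_cast; ring_nf
  rw [chiSum, sum_congr rfl hstep, sum_const, card_range, nsmul_eq_mul]
  simp [P, PathPartition.uniform]

variable (hL : Tendsto (fun u => ‖γ u - γ 0‖ / u) (𝓝[>] 0) (𝓝 L))
include hL

lemma norm_sub_le_of_tendsto {δ : ℝ} (hδ : δ ∈ Icc (0 : ℝ) 1) : ‖γ δ - γ 0‖ ≤ L * δ := by
  rcases hδ.1.eq_or_lt with rfl | hδ0
  · simp
  · exact ge_of_tendsto (tendsto_mul_norm_sub_div hL hδ0)
      (Eventually.of_forall (norm_sub_le_succ_mul_norm_sub hγ hδ))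

lemma lipschitzOnWith_of_tendsto : LipschitzOnWith L.toNNReal γ (Icc 0 1) := by
  refine LipschitzOnWith.of_dist_le_mul fun s hs t ht => ?_
  wlog hts : t ≤ s generalizing s t
  · rw [dist_comm, dist_comm s]; exact this t ht s hs (le_of_not_ge hts)
  have hst : s - t ∈ Icc (0 : ℝ) 1 := ⟨sub_nonneg.2 hts, by linarith [hs.2, ht.1]⟩
  calc dist (γ s) (γ t) = ‖γ (s - t) - γ 0‖ := by rw [dist_eq_norm, hγ s hs t ht hts]
    _ ≤ L * (s - t) := norm_sub_le_of_tendsto hγ hL hst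
    _ ≤ L.toNNReal * dist s t := by
        rw [Real.dist_eq, abs_of_nonneg hst.1]; gcongr; exact Real.le_coe_toNNReal L

lemma pathLength_eq_of_tendsto : pathLength γ = ENNReal.ofReal L := by
  refine le_antisymm (iSup_le fun P => ?_) (le_of_tendsto' (x := atTop)
    (f := fun n => ENNReal.ofReal (chiSum γ (PathPartition.uniform n))) ?_ fun n => ?_)
  · calc ENNReal.ofReal (chiSum γ P) ≤ ENNReal.ofReal L.toNNReal :=
          ENNReal.ofReal_le_ofReal
            (PathPartition.chiSum_le_of_lipschitzOnWith (lipschitzOnWith_of_tendsto hγ hL) P)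
      _ = ENNReal.ofReal L := by rw [ENNReal.ofReal_coe_nnreal, ENNReal.ofReal]
  · simp_rw [chiSum_uniform hγ]
    exact (ENNReal.continuous_ofReal.tendsto L).comp (by simpa using tendsto_mul_norm_sub_div hL one_pos)
  · exact le_iSup (fun P => ENNReal.ofReal (chiSum γ P)) _

end HomogeneousPath
lemma tendsto_two_mul_sub_div_sq {h : ℝ → ℝ} (hd : Differentiable ℝ h)
    (hd2 : DifferentiableAt ℝ (deriv h) 0) (h0 : deriv h 0 = 0) :
    Tendsto (fun δ => 2 * (h 0 - h δ) / δ ^ 2) (𝓝[>] 0) (𝓝 (-deriv (deriv h) 0)) := by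
  refine HasDerivAt.lhopital_zero_nhdsGT (f' := fun δ => -2 * deriv h δ) (g' := fun δ => 2 * δ)
    (Eventually.of_forall fun δ => ?_) (Eventually.of_forall fun δ => ?_) ?_ ?_ ?_ ?_
  · simpa using ((hd δ).hasDerivAt.const_sub (h 0)).const_mul 2
  · simpa using hasDerivAt_pow 2 δ
  · filter_upwards [self_mem_nhdsWithin] with δ (hδ : 0 < δ)
    positivity
  · have : Continuous fun δ => 2 * (h 0 - h δ) := by have := hd.continuous; fun_prop
    simpa using this.continuousWithinAt (s := Ioi 0) (x := 0) |>.tendsto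
  · have : Continuous fun δ : ℝ => δ ^ 2 := by fun_prop
    simpa using this.continuousWithinAt (s := Ioi 0) (x := 0) |>.tendsto
  · refine (hd2.hasDerivAt.tendsto_slope_zero_right.neg).congr' ?_
    filter_upwards [self_mem_nhdsWithin] with δ (hδ : 0 < δ)
    simp only [zero_add, h0, sub_zero, smul_eq_mul]
    field_simp

lemma norm_sub_sq_of_inner_eq {X H : Type*} [AddGroup X] [NormedAddCommGroup H]
    [InnerProductSpace ℝ H] {Z : Set X} {g : X → ℝ} {φ : X → H}
    (hφ : ∀ x ∈ Z, ∀ y ∈ Z, (inner ℝ (φ x) (φ y) : ℝ) = g (x - y)) {x y : X} (hx : x ∈ Z)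
    (hy : y ∈ Z) : ‖φ x - φ y‖ ^ 2 = 2 * (g 0 - g (x - y)) := by
  rw [norm_sub_sq_real, ← real_inner_self_eq_norm_sq, ← real_inner_self_eq_norm_sq, hφ x hx x hx,
    hφ y hy y hy, hφ x hx y hy, sub_self, sub_self]
  ring

section KernelSegment

variable {X H : Type*} [NormedAddCommGroup X] [NormedSpace ℝ X] [NormedAddCommGroup H]
  [InnerProductSpace ℝ H] {Z : Set X} {g : X → ℝ} {φ : X → H} {p q : X}
  (hZ : Convex ℝ Z) (hφ : ∀ x ∈ Z, ∀ y ∈ Z, (inner ℝ (φ x) (φ y) : ℝ) = g (x - y))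
  (hp : p ∈ Z) (hq : q ∈ Z)
include hZ hφ hp hq

lemma norm_sub_sq_segment {s t : ℝ} (hs : s ∈ Icc (0 : ℝ) 1) (ht : t ∈ Icc (0 : ℝ) 1) :
    ‖φ (p + s • (q - p)) - φ (p + t • (q - p))‖ ^ 2 = 2 * (g 0 - g ((s - t) • (q - p))) := by
  rw [norm_sub_sq_of_inner_eq hφ (hZ.add_smul_sub_mem hp hq hs) (hZ.add_smul_sub_mem hp hq ht),
    add_sub_add_left_eq_sub, sub_smul]

lemma norm_sub_segment_eq (s : ℝ) (hs : s ∈ Icc (0 : ℝ) 1) (t : ℝ) (ht : t ∈ Icc (0 : ℝ) 1)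
    (hts : t ≤ s) :
    ‖φ (p + s • (q - p)) - φ (p + t • (q - p))‖ =
      ‖φ (p + (s - t) • (q - p)) - φ (p + (0 : ℝ) • (q - p))‖ := by
  have hst : s - t ∈ Icc (0 : ℝ) 1 := ⟨sub_nonneg.2 hts, by linarith [hs.2, ht.1]⟩
  rw [← sq_eq_sq₀ (norm_nonneg _) (norm_nonneg _), norm_sub_sq_segment hZ hφ hp hq hs ht,
    norm_sub_sq_segment hZ hφ hp hq hst ⟨le_rfl, zero_le_one⟩, sub_zero]

lemma apply_smul_sub_le_apply_zero {u : ℝ} (hu : u ∈ Icc (-1 : ℝ) 1) :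
    g (u • (q - p)) ≤ g 0 := by
  have hs : max u 0 ∈ Icc (0 : ℝ) 1 := ⟨le_max_right _ _, max_le hu.2 zero_le_one⟩
  have ht : max (-u) 0 ∈ Icc (0 : ℝ) 1 := ⟨le_max_right _ _, max_le (by linarith [hu.1]) zero_le_one⟩
  have := norm_sub_sq_segment hZ hφ hp hq hs ht
  rw [max_zero_sub_max_neg_zero_eq_self] at this
  nlinarith [sq_nonneg ‖φ (p + max u 0 • (q - p)) - φ (p + max (-u) 0 • (q - p))‖]

lemma tendsto_norm_sub_segment_div (hg : ContDiff ℝ 2 g) :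
    Tendsto (fun u => ‖φ (p + u • (q - p)) - φ (p + (0 : ℝ) • (q - p))‖ / u) (𝓝[>] 0)
      (𝓝 √(-deriv (deriv fun u : ℝ => g (u • (q - p))) 0)) := by
  set h := fun u : ℝ => g (u • (q - p))
  have hh : ContDiff ℝ 2 h := hg.comp (contDiff_id.smul contDiff_const)
  have hmax : IsLocalMax h 0 :=
    Filter.eventually_of_mem (Icc_mem_nhds (neg_lt_zero.2 zero_lt_one) zero_lt_one) fun u hu => by
      simpa [h] using apply_smul_sub_le_apply_zero hZ hφ hp hq hu
  have hlim := tendsto_two_mul_sub_div_sq (hh.differentiable (by norm_num))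
    ((hh.iterate_deriv' 1 1).differentiable one_ne_zero 0) hmax.deriv_eq_zero
  refine ((Real.continuous_sqrt.tendsto _).comp hlim).congr' ?_
  filter_upwards [Ioc_mem_nhdsGT zero_lt_one] with u hu
  have hsq : 2 * (h 0 - h u) = ‖φ (p + u • (q - p)) - φ (p + (0 : ℝ) • (q - p))‖ ^ 2 := by
    rw [norm_sub_sq_segment hZ hφ hp hq ⟨hu.1.le, hu.2⟩ ⟨le_rfl, zero_le_one⟩]
    simp [h]
  rw [Function.comp_apply, hsq, ← div_pow, Real.sqrt_sq (div_nonneg (norm_nonneg _) hu.1.le)]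

end KernelSegment

section Hessian

variable {E : Type*} [NormedAddCommGroup E] [NormedSpace ℝ E] {g : E → ℝ}

lemma deriv_comp_add_smul (hg : Differentiable ℝ g) (x u : E) (r : ℝ) :
    deriv (fun r : ℝ => g (x + r • u)) r = fderiv ℝ g (x + r • u) u := by
  have hline : HasDerivAt (fun r : ℝ => x + r • u) u r := by
    simpa using ((hasDerivAt_id r).smul_const u).const_add x
  exact ((hg _).hasFDerivAt.comp_hasDerivAt r hline).deriv

lemma deriv_fderiv_comp_smul (hg : ContDiff ℝ 2 g) (w u : E) :
    deriv (fun s : ℝ => fderiv ℝ g (s • w) u) 0 = fderiv ℝ (fderiv ℝ g) 0 w u := by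
  have hdg : Differentiable ℝ (fderiv ℝ g) :=
    (hg.fderiv_right (by norm_num : (1 : WithTop ℕ∞) + 1 ≤ 2)).differentiable one_ne_zero
  have hline : HasDerivAt (fun s : ℝ => s • w) w 0 := by
    simpa using (hasDerivAt_id (0 : ℝ)).smul_const w
  have := ((hdg _).hasFDerivAt.comp_hasDerivAt 0 hline).clm_apply (hasDerivAt_const 0 u)
  simpa using this.deriv

lemma deriv_deriv_comp_smul (hg : ContDiff ℝ 2 g) (v : E) :
    deriv (deriv fun t : ℝ => g (t • v)) 0 = fderiv ℝ (fderiv ℝ g) 0 v v := by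
  have hd : deriv (fun t : ℝ => g (t • v)) = fun t => fderiv ℝ g (t • v) v := funext fun t => by
    simpa using deriv_comp_add_smul (hg.differentiable two_ne_zero) 0 v t
  rw [hd, deriv_fderiv_comp_smul hg]

end Hessian

lemma negHess_apply {d : ℕ} {g : EuclideanSpace ℝ (Fin d) → ℝ} (hg : ContDiff ℝ 2 g)
    (i j : Fin d) :
    negHess g i j =
      -fderiv ℝ (fderiv ℝ g) 0 (EuclideanSpace.single j 1) (EuclideanSpace.single i 1) := by
  have hinner : (fun s : ℝ => deriv (fun r : ℝ => g (r • EuclideanSpace.single i (1 : ℝ) +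
      s • EuclideanSpace.single j (1 : ℝ))) 0) =
      fun s => fderiv ℝ g (s • EuclideanSpace.single j 1) (EuclideanSpace.single i 1) :=
    funext fun s => by
      simpa [add_comm] using deriv_comp_add_smul (hg.differentiable two_ne_zero)
        (s • EuclideanSpace.single j (1 : ℝ)) (EuclideanSpace.single i 1) 0
  rw [negHess, hinner, deriv_fderiv_comp_smul hg]

lemma quadForm_eq_apply {d : ℕ} (H : Matrix (Fin d) (Fin d) ℝ)
    (B : EuclideanSpace ℝ (Fin d) →L[ℝ] EuclideanSpace ℝ (Fin d) →L[ℝ] ℝ)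
    (hH : ∀ i j, H i j = B (EuclideanSpace.single j 1) (EuclideanSpace.single i 1))
    (v : EuclideanSpace ℝ (Fin d)) : quadForm H v = B v v := by
  conv_rhs => rw [← (EuclideanSpace.basisFun (Fin d) ℝ).sum_repr v]
  simp only [map_sum, map_smul, FunLike.coe_sum, Finset.sum_apply, FunLike.coe_smul,
    Pi.smul_apply, smul_eq_mul, EuclideanSpace.basisFun_repr, EuclideanSpace.basisFun_apply,
    quadForm, hH, Finset.mul_sum]
  exact sum_congr rfl fun i _ => sum_congr rfl fun j _ => by ring

lemma quadForm_negHess {d : ℕ} {g : EuclideanSpace ℝ (Fin d) → ℝ} (hg : ContDiff ℝ 2 g)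
    (v : EuclideanSpace ℝ (Fin d)) :
    quadForm (negHess g) v = -deriv (deriv fun t : ℝ => g (t • v)) 0 := by
  rw [quadForm_eq_apply _ (-fderiv ℝ (fderiv ℝ g) 0) (fun i j => negHess_apply hg i j),
    deriv_deriv_comp_smul hg]
  rfl

theorem translation_invariant_straight_line_length_general
    {d : ℕ}
    (Z : Set (EuclideanSpace ℝ (Fin d))) (hZconv : Convex ℝ Z)
    (g : EuclideanSpace ℝ (Fin d) → ℝ) (hg : ContDiff ℝ 2 g)
    (φ : EuclideanSpace ℝ (Fin d) → l2)
    (hφ : ∀ x ∈ Z, ∀ y ∈ Z, (inner ℝ (φ x) (φ y) : ℝ) = g (x - y))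
    -- φ⁻¹ : the inverse of φ on ℳ
    (φinv : l2 → EuclideanSpace ℝ (Fin d)) (hφinv : ∀ x ∈ Z, φinv (φ x) = x)
    (a b : l2) (ha : a ∈ φ '' Z) (hb : b ∈ φ '' Z) :
    IsPathIn (φ '' Z) a b (fun t => φ (φinv a + t • (φinv b - φinv a))) ∧
      pathLength (fun t => φ (φinv a + t • (φinv b - φinv a))) =
        ENNReal.ofReal (Real.sqrt (quadForm (negHess g) (φinv b - φinv a))) := by
  obtain ⟨p, hp, rfl⟩ := ha
  obtain ⟨q, hq, rfl⟩ := hb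
  rw [hφinv p hp, hφinv q hq, quadForm_negHess hg]
  have hγ := norm_sub_segment_eq hZconv hφ hp hq
  have hL := tendsto_norm_sub_segment_div hZconv hφ hp hq hg
  refine ⟨⟨(lipschitzOnWith_of_tendsto hγ hL).continuousOn,
    fun t ht => mem_image_of_mem φ (hZconv.add_smul_sub_mem hp hq ht), by simp, by simp⟩,
    pathLength_eq_of_tendsto hγ hL⟩

/-- Translation-invariant kernels: the image under `φ` of the straight
line `η̃_t = φ⁻¹(a) + t(φ⁻¹(b) − φ⁻¹(a))` is a path `γ̃` in `ℳ` with end-points `a, b`,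
of length `⟨φ⁻¹(b) − φ⁻¹(a), M(φ⁻¹(b) − φ⁻¹(a))⟩^{1/2}`. -/
theorem translation_invariant_straight_line_length
    {d : ℕ} (hd : 1 ≤ d)
    (Z : Set (EuclideanSpace ℝ (Fin d))) (hZ : IsCompact Z) (hZconv : Convex ℝ Z)
    (g : EuclideanSpace ℝ (Fin d) → ℝ) (hg : ContDiff ℝ 2 g)
    (hM : (negHess g).PosDef)
    (φ : EuclideanSpace ℝ (Fin d) → l2)
    (hφ : ∀ x ∈ Z, ∀ y ∈ Z, (inner ℝ (φ x) (φ y) : ℝ) = g (x - y))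
    -- Assumption 1
    (hA1 : ∀ x ∈ Z, ∀ y ∈ Z, x ≠ y → ∃ a ∈ Z, g (x - a) ≠ g (y - a))
    -- φ⁻¹ : the inverse of φ on ℳ
    (φinv : l2 → EuclideanSpace ℝ (Fin d)) (hφinv : ∀ x ∈ Z, φinv (φ x) = x)
    (a b : l2) (ha : a ∈ φ '' Z) (hb : b ∈ φ '' Z) :
    IsPathIn (φ '' Z) a b (fun t => φ (φinv a + t • (φinv b - φinv a))) ∧
      pathLength (fun t => φ (φinv a + t • (φinv b - φinv a))) =
        ENNReal.ofReal (Real.sqrt (quadForm (negHess g) (φinv b - φinv a))) :=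
  translation_invariant_straight_line_length_general Z hZconv g hg φ hφ φinv hφinv a b ha hb
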